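/- A matrix B ∈ interior(COP^n) with min_COP(B) = 1 is a vertex of the locally finite polyhedron R = { X ∈ S^n : v^T X v ≥ 1 for all v ∈ ℤ^n_{≥0} \ {0} } if and only if B is COP-perfect, i.e., B is the unique symmetric solution X of the system ⟨X, vv^T⟩ = 1 for all v ∈ Min_COP(B). -/
import Mathlib


open Matrix

/-- The quadratic form `B[x] = xᵀ B x`. -/
def quadForm {n : ℕ} (B : Matrix (Fin n) (Fin n) ℝ) (x : Fin n → ℝ) : ℝ :=
  x ⬝ᵥ B.mulVec x

/-- The copositive minimum. -/
noncomputable def copositiveMin {n : ℕ} (B : Matrix (Fin n) (Fin n) ℝ) : ℝ :=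
  sInf {t : ℝ | ∃ v : Fin n → ℤ, (∀ i, 0 ≤ v i) ∧ v ≠ 0 ∧
    t = quadForm B (fun i => (v i : ℝ))}

/-- The set of minimizers of the copositive minimum. -/
def copositiveMinSet {n : ℕ} (B : Matrix (Fin n) (Fin n) ℝ) : Set (Fin n → ℤ) :=
  {v | (∀ i, 0 ≤ v i) ∧ v ≠ 0 ∧ quadForm B (fun i => (v i : ℝ)) = copositiveMin B}

/-- The Ryshkov polyhedron inside the symmetric matrices. -/
def ryshkov (n : ℕ) : Set (Matrix (Fin n) (Fin n) ℝ) :=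
  {X | X.IsSymm ∧ ∀ v : Fin n → ℤ, (∀ i, 0 ≤ v i) → v ≠ 0 →
    1 ≤ quadForm X (fun i => (v i : ℝ))}

/-- `B` is a vertex of the convex set `S`: it is the unique minimizer over `S`
of some linear functional (given by a matrix `C` via the trace inner product). -/
def IsVertex {n : ℕ} (S : Set (Matrix (Fin n) (Fin n) ℝ))
    (B : Matrix (Fin n) (Fin n) ℝ) : Prop :=
  B ∈ S ∧ ∃ C : Matrix (Fin n) (Fin n) ℝ,
    ∀ X ∈ S, Matrix.trace (C * B) ≤ Matrix.trace (C * X) ∧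
      (Matrix.trace (C * X) = Matrix.trace (C * B) → X = B)


lemma quadForm_expand {n : ℕ} (A : Matrix (Fin n) (Fin n) ℝ) (x : Fin n → ℝ) :
    quadForm A x = ∑ i, ∑ j, x i * (A i j * x j) := by
  simp [quadForm, dotProduct, Matrix.mulVec, Finset.mul_sum]

lemma quadForm_smul_vec {n : ℕ} (A : Matrix (Fin n) (Fin n) ℝ) (c : ℝ) (x : Fin n → ℝ) :
    quadForm A (c • x) = c ^ 2 * quadForm A x := by
  simp only [quadForm_expand, Finset.mul_sum, Pi.smul_apply, smul_eq_mul]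
  congr 1; ext i; congr 1; ext j; ring

lemma quadForm_sub {n : ℕ} (A B : Matrix (Fin n) (Fin n) ℝ) (x : Fin n → ℝ) :
    quadForm (A - B) x = quadForm A x - quadForm B x := by
  simp only [quadForm_expand, Matrix.sub_apply, ← Finset.sum_sub_distrib]
  congr 1; ext i; congr 1; ext j; ring

lemma quadForm_add_smul {n : ℕ} (A D : Matrix (Fin n) (Fin n) ℝ) (t : ℝ) (x : Fin n → ℝ) :
    quadForm (A + t • D) x = quadForm A x + t * quadForm D x := by
  simp only [quadForm_expand, Matrix.add_apply, Matrix.smul_apply, smul_eq_mul,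
    Finset.mul_sum, ← Finset.sum_add_distrib]
  congr 1; ext i; congr 1; ext j; ring

lemma continuous_quadForm {n : ℕ} (A : Matrix (Fin n) (Fin n) ℝ) :
    Continuous fun x : Fin n → ℝ => quadForm A x := by
  simp only [quadForm_expand]
  exact continuous_finset_sum _ fun i _ => continuous_finset_sum _ fun j _ =>
    (continuous_apply i).mul (continuous_const.mul (continuous_apply j))

lemma quadForm_abs_bound {n : ℕ} (A : Matrix (Fin n) (Fin n) ℝ) :
    ∃ M > 0, ∀ x : Fin n → ℝ, |quadForm A x| ≤ M * ∑ i, x i ^ 2 := by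
  refine ⟨(∑ i, ∑ j, |A i j|) + 1, by positivity, fun x => ?_⟩
  have h1 : |quadForm A x| ≤ ∑ i, ∑ j, |A i j| * (x i ^ 2 + x j ^ 2) / 2 := by
    rw [quadForm_expand]
    refine (Finset.abs_sum_le_sum_abs _ _).trans (Finset.sum_le_sum fun i _ =>
      (Finset.abs_sum_le_sum_abs _ _).trans (Finset.sum_le_sum fun j _ => ?_))
    rw [abs_mul, abs_mul]
    have h2 : |x i| * |x j| ≤ (x i ^ 2 + x j ^ 2) / 2 := by
      nlinarith [sq_nonneg (|x i| - |x j|), sq_abs (x i), sq_abs (x j)]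
    calc |x i| * (|A i j| * |x j|) = |A i j| * (|x i| * |x j|) := by ring
      _ ≤ |A i j| * ((x i ^ 2 + x j ^ 2) / 2) := by
          exact mul_le_mul_of_nonneg_left h2 (abs_nonneg _)
      _ = |A i j| * (x i ^ 2 + x j ^ 2) / 2 := by ring
  have hS : (0:ℝ) ≤ ∑ i, x i ^ 2 := Finset.sum_nonneg fun i _ => sq_nonneg _
  have h3 : ∀ i j : Fin n, |A i j| * (x i ^ 2 + x j ^ 2) / 2 ≤ |A i j| * ∑ k, x k ^ 2 := by
    intro i j
    have hi : x i ^ 2 ≤ ∑ k, x k ^ 2 :=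
      Finset.single_le_sum (fun k _ => sq_nonneg (x k)) (Finset.mem_univ i)
    have hj : x j ^ 2 ≤ ∑ k, x k ^ 2 :=
      Finset.single_le_sum (fun k _ => sq_nonneg (x k)) (Finset.mem_univ j)
    have := abs_nonneg (A i j)
    nlinarith
  calc |quadForm A x| ≤ ∑ i, ∑ j, |A i j| * (x i ^ 2 + x j ^ 2) / 2 := h1
    _ ≤ ∑ i, ∑ j, |A i j| * ∑ k, x k ^ 2 :=
        Finset.sum_le_sum fun i _ => Finset.sum_le_sum fun j _ => h3 i j
    _ = (∑ i, ∑ j, |A i j|) * ∑ k, x k ^ 2 := by rw [Finset.sum_mul]; congr 1; ext i; rw [Finset.sum_mul]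
    _ ≤ ((∑ i, ∑ j, |A i j|) + 1) * ∑ k, x k ^ 2 := by nlinarith

lemma quadForm_pos_bound {n : ℕ} (B : Matrix (Fin n) (Fin n) ℝ)
    (hint : ∀ x : Fin n → ℝ, (∀ i, 0 ≤ x i) → x ≠ 0 → 0 < quadForm B x) (hn : 0 < n) :
    ∃ δ > 0, ∀ x : Fin n → ℝ, (∀ i, 0 ≤ x i) → δ * ∑ i, x i ^ 2 ≤ quadForm B x := by
  set K : Set (Fin n → ℝ) := {x | (∀ i, 0 ≤ x i) ∧ ∑ i, x i ^ 2 = 1} with hK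
  have hKc : IsCompact K := by
    apply Metric.isCompact_of_isClosed_isBounded
    · have h1 : IsClosed {x : Fin n → ℝ | ∀ i, 0 ≤ x i} := by
        have : {x : Fin n → ℝ | ∀ i, 0 ≤ x i} = ⋂ i, {x | 0 ≤ x i} := by ext; simp [Set.mem_iInter]
        rw [this]
        exact isClosed_iInter fun i => isClosed_le continuous_const (continuous_apply i)
      have h2 : IsClosed {x : Fin n → ℝ | ∑ i, x i ^ 2 = 1} :=
        isClosed_eq (continuous_finset_sum _ fun i _ => (continuous_apply i).pow 2) continuous_const
      exact h1.inter h2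
    · rw [Metric.isBounded_iff_subset_closedBall 0]
      refine ⟨1, fun x hx => ?_⟩
      rw [Metric.mem_closedBall, dist_zero_right]
      rw [pi_norm_le_iff_of_nonneg zero_le_one]
      intro i
      have hi : x i ^ 2 ≤ 1 := hx.2 ▸ Finset.single_le_sum (fun k _ => sq_nonneg (x k)) (Finset.mem_univ i)
      rw [Real.norm_eq_abs, abs_le]
      constructor <;> nlinarith
  have hKne : K.Nonempty := by
    refine ⟨Pi.single ⟨0, hn⟩ 1, fun i => ?_, ?_⟩
    · by_cases h : i = ⟨0, hn⟩ <;> simp [Pi.single_apply, h]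
    · rw [Finset.sum_eq_single ⟨0, hn⟩]
      · simp
      · intro b _ hb; simp [Pi.single_apply, hb]
      · simp
  obtain ⟨z, hzK, hz⟩ := hKc.exists_isMinOn hKne (continuous_quadForm B).continuousOn
  have hzne : z ≠ 0 := by
    intro h; rw [h] at hzK
    obtain ⟨-, h2⟩ := hzK
    simp only [Pi.zero_apply, ne_eq, OfNat.ofNat_ne_zero, not_false_eq_true, zero_pow,
      Finset.sum_const_zero] at h2
    exact zero_ne_one h2
  have hδ : 0 < quadForm B z := hint z hzK.1 hzne
  refine ⟨quadForm B z, hδ, fun x hx => ?_⟩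
  rcases eq_or_ne x 0 with rfl | hxne
  · simp [quadForm_expand]
  · have hs : 0 < ∑ i, x i ^ 2 := by
      have : ∃ i, x i ≠ 0 := by
        by_contra h; push_neg at h; exact hxne (funext h)
      obtain ⟨i, hi⟩ := this
      calc (0:ℝ) < x i ^ 2 := pow_pos ((hx i).lt_of_ne (Ne.symm hi)) 2
        _ ≤ ∑ k, x k ^ 2 := Finset.single_le_sum (fun k _ => sq_nonneg (x k)) (Finset.mem_univ i)
    set c : ℝ := (∑ i, x i ^ 2).sqrt⁻¹ with hc
    have hcpos : 0 < c := by positivity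
    have hcx : c • x ∈ K := by
      constructor
      · intro i
        exact mul_nonneg hcpos.le (hx i)
      · have : ∑ i, (c • x) i ^ 2 = c ^ 2 * ∑ i, x i ^ 2 := by
          simp [Finset.mul_sum, mul_pow]
        rw [this, hc, inv_pow, Real.sq_sqrt hs.le]
        field_simp
    have h1 : quadForm B z ≤ quadForm B (c • x) := hz hcx
    rw [quadForm_smul_vec] at h1
    have hc2 : c ^ 2 = (∑ i, x i ^ 2)⁻¹ := by
      rw [hc, inv_pow, Real.sq_sqrt hs.le]
    rw [hc2, inv_mul_eq_div, le_div_iff₀ hs] at h1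
    exact h1

lemma trace_dot {n : ℕ} (v : Fin n → ℝ) (X : Matrix (Fin n) (Fin n) ℝ) :
    Matrix.trace ((Matrix.of fun i j => v i * v j) * X) = quadForm X v := by
  simp only [Matrix.trace, Matrix.diag, Matrix.mul_apply, Matrix.of_apply, quadForm_expand]
  rw [Finset.sum_comm]
  congr 1; ext j; congr 1; ext i; ring

lemma cast_ne_zero' {n : ℕ} {v : Fin n → ℤ} (hv : v ≠ 0) :
    (fun i => (v i : ℝ)) ≠ 0 := by
  intro h
  apply hv
  funext i
  have h2 : (v i : ℝ) = 0 := by simpa using congrFun h i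
  exact_mod_cast h2

lemma finite_small {n : ℕ} (B : Matrix (Fin n) (Fin n) ℝ) (δ : ℝ) (hδ : 0 < δ)
    (hb : ∀ x : Fin n → ℝ, (∀ i, 0 ≤ x i) → δ * ∑ i, x i ^ 2 ≤ quadForm B x) (K : ℝ) :
    {v : Fin n → ℤ | (∀ i, 0 ≤ v i) ∧ quadForm B (fun i => (v i : ℝ)) ≤ K}.Finite := by
  set N : ℤ := ⌈K / δ⌉ with hN
  have hsub : {v : Fin n → ℤ | (∀ i, 0 ≤ v i) ∧ quadForm B (fun i => (v i : ℝ)) ≤ K} ⊆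
      Set.pi Set.univ (fun _ => Set.Icc (0:ℤ) N) := by
    rintro v ⟨hv0, hvK⟩ 
    rw [Set.mem_pi]
    intro i _
    have h1 : δ * ∑ j, ((v j : ℝ)) ^ 2 ≤ K := le_trans (hb _ (fun j => by exact_mod_cast hv0 j)) hvK
    have h2 : ((v i : ℝ)) ^ 2 ≤ K / δ := by
      have hle : ((v i:ℝ)) ^ 2 ≤ ∑ j, ((v j:ℝ)) ^ 2 :=
        Finset.single_le_sum (f := fun j => ((v j:ℝ)) ^ 2) (fun j _ => sq_nonneg _)
          (Finset.mem_univ i)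
      rw [le_div_iff₀ hδ]
      nlinarith
    have h3 : ((v i : ℝ)) ^ 2 ≤ (N : ℝ) := h2.trans (Int.le_ceil _)
    have h4 : (v i) ^ 2 ≤ N := by exact_mod_cast h3
    refine ⟨hv0 i, ?_⟩
    nlinarith [hv0 i, sq_nonneg (v i - 1)]
  exact Set.Finite.subset (Set.Finite.pi fun _ => Set.finite_Icc 0 N) hsub

lemma min_structure {n : ℕ} (B : Matrix (Fin n) (Fin n) ℝ)
    (hint : ∀ x : Fin n → ℝ, (∀ i, 0 ≤ x i) → x ≠ 0 → 0 < quadForm B x)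
    (hmin : copositiveMin B = 1) :
    (copositiveMinSet B).Finite ∧ (copositiveMinSet B).Nonempty ∧
    (∀ v : Fin n → ℤ, (∀ i, 0 ≤ v i) → v ≠ 0 → 1 ≤ quadForm B (fun i => (v i : ℝ))) ∧
    ∃ ε > 0, ∀ v : Fin n → ℤ, (∀ i, 0 ≤ v i) → v ≠ 0 → v ∉ copositiveMinSet B →
      1 + ε ≤ quadForm B (fun i => (v i : ℝ)) := by
  classical
  set V : Set ℝ := {t : ℝ | ∃ v : Fin n → ℤ, (∀ i, 0 ≤ v i) ∧ v ≠ 0 ∧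
    t = quadForm B (fun i => (v i : ℝ))} with hV
  -- n positive
  rcases Nat.eq_zero_or_pos n with hn0 | hn
  · exfalso
    subst hn0
    have hVe : V = ∅ := by
      ext t
      simp only [hV, Set.mem_setOf_eq, Set.mem_empty_iff_false, iff_false]
      rintro ⟨v, -, hv, -⟩
      exact hv (funext fun i => absurd i.2 (by omega))
    have h0 : copositiveMin B = 0 := by rw [copositiveMin, ← hV, hVe, Real.sInf_empty]
    rw [hmin] at h0; exact one_ne_zero h0
  have hbdd : BddBelow V := by
    refine ⟨0, fun t ht => ?_⟩
    obtain ⟨v, hv0, hvne, rfl⟩ := ht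
    exact (hint _ (fun i => by exact_mod_cast hv0 i) (cast_ne_zero' hvne)).le
  have hlow : ∀ t ∈ V, (1:ℝ) ≤ t := by
    intro t ht
    have h2 : copositiveMin B ≤ t := csInf_le hbdd ht
    rw [hmin] at h2
    exact h2
  -- basis vector
  set e0 : Fin n → ℤ := Pi.single ⟨0, hn⟩ 1 with he0
  have he0nn : ∀ i, 0 ≤ e0 i := by
    intro i; by_cases h : i = ⟨0, hn⟩ <;> simp [he0, Pi.single_apply, h]
  have he0ne : e0 ≠ 0 := by
    intro h
    have h2 := congrFun h ⟨0, hn⟩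
    simp only [he0, Pi.single_eq_same, Pi.zero_apply] at h2
    exact one_ne_zero h2
  obtain ⟨δ, hδ, hb⟩ := quadForm_pos_bound B hint hn
  set K : ℝ := quadForm B (fun i => (e0 i : ℝ)) + 1 with hK
  have hKV : quadForm B (fun i => (e0 i : ℝ)) ∈ V := ⟨e0, he0nn, he0ne, rfl⟩
  have hK2 : 2 ≤ K := by have := hlow _ hKV; linarith
  have hSfin := finite_small B δ hδ hb K
  set S' : Set (Fin n → ℤ) :=
    {v | ((∀ i, 0 ≤ v i) ∧ quadForm B (fun i => (v i : ℝ)) ≤ K) ∧ v ≠ 0} with hS'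
  have hS'fin : S'.Finite := hSfin.subset (fun v hv => hv.1)
  have hS'e0 : e0 ∈ S' := ⟨⟨he0nn, by rw [hK]; linarith⟩, he0ne⟩
  set F : Finset (Fin n → ℤ) := hS'fin.toFinset with hF
  have hFmem : ∀ v, v ∈ F ↔ v ∈ S' := fun v => hS'fin.mem_toFinset
  have hFne : F.Nonempty := ⟨e0, (hFmem e0).2 hS'e0⟩
  set G : Finset ℝ := F.image (fun v => quadForm B (fun i => (v i : ℝ))) with hG
  have hGne : G.Nonempty := hFne.image _
  set m : ℝ := G.min' hGne with hm
  obtain ⟨vstar, hvstarF, hvstar⟩ := Finset.mem_image.1 (G.min'_mem hGne)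
  rw [← hm] at hvstar
  have hvstarS' := (hFmem vstar).1 hvstarF
  have hmV : m ∈ V := ⟨vstar, hvstarS'.1.1, hvstarS'.2, hvstar.symm⟩
  have hm1 : m = 1 := by
    refine le_antisymm ?_ (hlow m hmV)
    rw [← hmin, copositiveMin, ← hV]
    refine le_csInf ⟨_, hKV⟩ ?_
    rintro t ⟨v, hv0, hvne, rfl⟩
    by_cases hvS : v ∈ S'
    · exact G.min'_le _ (Finset.mem_image_of_mem _ ((hFmem v).2 hvS))
    · have : ¬ quadForm B (fun i => (v i : ℝ)) ≤ K := by
        intro h; exact hvS ⟨⟨hv0, h⟩, hvne⟩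
      push_neg at this
      calc m ≤ quadForm B (fun i => (e0 i : ℝ)) :=
            G.min'_le _ (Finset.mem_image_of_mem _ ((hFmem e0).2 hS'e0))
        _ ≤ K := by rw [hK]; linarith
        _ ≤ _ := this.le
  have hvstarMin : vstar ∈ copositiveMinSet B :=
    ⟨hvstarS'.1.1, hvstarS'.2, by rw [hvstar, hm1, hmin]⟩
  have hMinsub : copositiveMinSet B ⊆ S' := by
    rintro v ⟨hv0, hvne, hveq⟩
    exact ⟨⟨hv0, by rw [hveq, hmin]; linarith⟩, hvne⟩
  refine ⟨hSfin.subset (fun v hv => (hMinsub hv).1), ⟨vstar, hvstarMin⟩,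
    fun v hv0 hvne => hlow _ ⟨v, hv0, hvne, rfl⟩, ?_⟩
  -- gap
  set F2 : Finset (Fin n → ℤ) := F.filter (fun v => v ∉ copositiveMinSet B) with hF2
  by_cases hF2ne : F2.Nonempty
  · set G2 : Finset ℝ := F2.image (fun v => quadForm B (fun i => (v i : ℝ))) with hG2
    have hG2ne : G2.Nonempty := hF2ne.image _
    set m2 : ℝ := G2.min' hG2ne with hm2
    have hm2gt : 1 < m2 := by
      obtain ⟨w, hwF2, hw⟩ := Finset.mem_image.1 (G2.min'_mem hG2ne)
      rw [← hm2] at hw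
      rw [hF2, Finset.mem_filter] at hwF2
      obtain ⟨hwF, hwnm⟩ := hwF2
      have hwS' := (hFmem w).1 hwF
      have h1 : 1 ≤ m2 := hw ▸ hlow _ ⟨w, hwS'.1.1, hwS'.2, rfl⟩
      rcases h1.lt_or_eq with h | h
      · exact h
      · exfalso
        exact hwnm ⟨hwS'.1.1, hwS'.2, by rw [hw, ← h, hmin]⟩
    refine ⟨min (m2 - 1) 1, lt_min (by linarith) one_pos, fun v hv0 hvne hvnm => ?_⟩
    by_cases hvS : v ∈ S'
    · have hvF2 : v ∈ F2 := by
        rw [hF2, Finset.mem_filter]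
        exact ⟨(hFmem v).2 hvS, hvnm⟩
      have := G2.min'_le _ (Finset.mem_image_of_mem _ hvF2)
      have h2 : min (m2 - 1) 1 ≤ m2 - 1 := min_le_left _ _
      linarith
    · have : ¬ quadForm B (fun i => (v i : ℝ)) ≤ K := fun h => hvS ⟨⟨hv0, h⟩, hvne⟩
      push_neg at this
      have h2 : min (m2 - 1) 1 ≤ 1 := min_le_right _ _
      linarith
  · refine ⟨1, one_pos, fun v hv0 hvne hvnm => ?_⟩
    by_cases hvS : v ∈ S'
    · exfalso
      exact hF2ne ⟨v, by rw [hF2, Finset.mem_filter]; exact ⟨(hFmem v).2 hvS, hvnm⟩⟩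
    · have : ¬ quadForm B (fun i => (v i : ℝ)) ≤ K := fun h => hvS ⟨⟨hv0, h⟩, hvne⟩
      push_neg at this
      linarith

theorem vertex_iff_perfect {n : ℕ} (B : Matrix (Fin n) (Fin n) ℝ)
    (hB : B.IsSymm)
    (hint : ∀ x : Fin n → ℝ, (∀ i, 0 ≤ x i) → x ≠ 0 → 0 < quadForm B x)
    (hmin : copositiveMin B = 1) :
    IsVertex (ryshkov n) B ↔
      (∀ X : Matrix (Fin n) (Fin n) ℝ, X.IsSymm →
        (∀ v ∈ copositiveMinSet B, quadForm X (fun i => (v i : ℝ)) = 1) → X = B) := by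
  classical
  obtain ⟨hfin, hne, hlow1, ε, hε, hgap⟩ := min_structure B hint hmin
  have hn : 0 < n := by
    rcases Nat.eq_zero_or_pos n with h0 | h
    · exfalso
      obtain ⟨v, -, hvne, -⟩ := hne
      exact hvne (funext fun i => absurd i.2 (by omega))
    · exact h
  obtain ⟨δ, hδ, hb⟩ := quadForm_pos_bound B hint hn
  have hBval : ∀ v ∈ copositiveMinSet B, quadForm B (fun i => (v i : ℝ)) = 1 := by
    rintro v ⟨-, -, hv⟩
    rw [hv, hmin]
  have hBR : B ∈ ryshkov n := ⟨hB, fun v hv0 hvne => hlow1 v hv0 hvne⟩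
  constructor
  · -- vertex → perfect
    rintro ⟨-, C, hC⟩ X hX hXc
    set D : Matrix (Fin n) (Fin n) ℝ := X - B with hD
    obtain ⟨M, hM, hMb⟩ := quadForm_abs_bound D
    have hD0 : ∀ v ∈ copositiveMinSet B, quadForm D (fun i => (v i : ℝ)) = 0 := by
      intro v hv
      rw [hD, quadForm_sub, hXc v hv, hBval v hv, sub_self]
    set t : ℝ := δ * ε / (M * (1 + ε)) with ht
    have htpos : 0 < t := by positivity
    have ht_eq : t * (M * (1 + ε)) = δ * ε := by
      rw [ht]; field_simp
    -- key inequality for non-minimal vectors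
    have hkey : ∀ v : Fin n → ℤ, (∀ i, 0 ≤ v i) → v ≠ 0 →
        (1 ≤ quadForm B (fun i => (v i : ℝ)) + t * quadForm D (fun i => (v i : ℝ)) ∧
         1 ≤ quadForm B (fun i => (v i : ℝ)) - t * quadForm D (fun i => (v i : ℝ))) := by
      intro v hv0 hvne
      by_cases hvm : v ∈ copositiveMinSet B
      · rw [hD0 v hvm, hBval v hvm]
        norm_num
      · set q : ℝ := quadForm B (fun i => (v i : ℝ)) with hq
        set d : ℝ := quadForm D (fun i => (v i : ℝ)) with hd
        set S : ℝ := ∑ i, ((v i : ℝ)) ^ 2 with hS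
        have hqε : 1 + ε ≤ q := hgap v hv0 hvne hvm
        have hdS : |d| ≤ M * S := hMb _
        have hSq : δ * S ≤ q := hb _ (fun i => by exact_mod_cast hv0 i)
        have habs : |t * d| * (1 + ε) ≤ ε * q := by
          have h1 : |t * d| = t * |d| := by
            rw [abs_mul, abs_of_nonneg htpos.le]
          have h2 : t * |d| ≤ t * (M * S) := mul_le_mul_of_nonneg_left hdS htpos.le
          have h3 : t * (M * S) * (1 + ε) = δ * ε * S := by
            have : t * (M * S) * (1 + ε) = t * (M * (1 + ε)) * S := by ring
            rw [this, ht_eq]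
          have h4 : δ * ε * S = ε * (δ * S) := by ring
          have h5 : ε * (δ * S) ≤ ε * q := mul_le_mul_of_nonneg_left hSq hε.le
          calc |t * d| * (1 + ε) = t * |d| * (1 + ε) := by rw [h1]
            _ ≤ t * (M * S) * (1 + ε) := by
                have : (0:ℝ) ≤ 1 + ε := by linarith
                nlinarith [abs_nonneg d]
            _ = δ * ε * S := h3
            _ = ε * (δ * S) := h4
            _ ≤ ε * q := h5
        have hb1 : -(t * d) ≤ |t * d| := neg_le_abs _
        have hb2 : t * d ≤ |t * d| := le_abs_self _
        have h1e : (0:ℝ) < 1 + ε := by linarith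
        constructor <;> nlinarith [abs_nonneg (t * d)]
    have hmem : ∀ s : ℝ, s = t ∨ s = -t → B + s • D ∈ ryshkov n := by
      rintro s hs
      refine ⟨?_, ?_⟩
      · have hDsymm : D.IsSymm := hX.sub hB
        exact (hB.add (hDsymm.smul s))
      · intro v hv0 hvne
        rw [quadForm_add_smul]
        rcases hs with rfl | rfl
        · exact (hkey v hv0 hvne).1
        · have := (hkey v hv0 hvne).2
          linarith [this]
    have hplus := hC _ (hmem t (Or.inl rfl))
    have hminus := hC _ (hmem (-t) (Or.inr rfl))
    have htr : ∀ s : ℝ, Matrix.trace (C * (B + s • D)) =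
        Matrix.trace (C * B) + s * Matrix.trace (C * D) := by
      intro s
      rw [mul_add, Matrix.trace_add, Matrix.mul_smul, Matrix.trace_smul, smul_eq_mul]
    have h1 := hplus.1
    have h2 := hminus.1
    rw [htr] at h1 h2
    have htr0 : Matrix.trace (C * D) = 0 := by nlinarith
    have heq : Matrix.trace (C * (B + t • D)) = Matrix.trace (C * B) := by
      rw [htr, htr0, mul_zero, add_zero]
    have hBeq := hplus.2 heq
    have hD0' : t • D = 0 := by
      have := hBeq
      rwa [add_eq_left] at this
    have : D = 0 := by
      rcases smul_eq_zero.1 hD0' with h | h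
      · exact absurd h htpos.ne'
      · exact h
    rw [hD] at this
    exact sub_eq_zero.1 this
  · -- perfect → vertex
    intro hperf
    refine ⟨hBR, ?_⟩
    set F : Finset (Fin n → ℤ) := hfin.toFinset with hF
    have hFmem : ∀ v, v ∈ F ↔ v ∈ copositiveMinSet B := fun v => hfin.mem_toFinset
    have hFne : F.Nonempty := by
      obtain ⟨v, hv⟩ := hne
      exact ⟨v, (hFmem v).2 hv⟩
    set C : Matrix (Fin n) (Fin n) ℝ :=
      ∑ v ∈ F, Matrix.of (fun i j => ((v i : ℝ)) * ((v j : ℝ))) with hC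
    have htrC : ∀ Y : Matrix (Fin n) (Fin n) ℝ,
        Matrix.trace (C * Y) = ∑ v ∈ F, quadForm Y (fun i => (v i : ℝ)) := by
      intro Y
      rw [hC, Finset.sum_mul, Matrix.trace_sum]
      exact Finset.sum_congr rfl fun v _ => trace_dot _ Y
    have htrCB : Matrix.trace (C * B) = (F.card : ℝ) := by
      rw [htrC]
      rw [Finset.sum_congr rfl fun v hv => hBval v ((hFmem v).1 hv)]
      simp
    refine ⟨C, fun X hXR => ?_⟩
    obtain ⟨hXsymm, hXineq⟩ := hXR
    have hXge : ∀ v ∈ F, (1:ℝ) ≤ quadForm X (fun i => (v i : ℝ)) := by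
      intro v hv
      obtain ⟨hv0, hvne, -⟩ := (hFmem v).1 hv
      exact hXineq v hv0 hvne
    have hsum_ge : (F.card : ℝ) ≤ ∑ v ∈ F, quadForm X (fun i => (v i : ℝ)) := by
      calc (F.card : ℝ) = ∑ _v ∈ F, (1:ℝ) := by simp
        _ ≤ _ := Finset.sum_le_sum hXge
    constructor
    · rw [htrCB, htrC]
      exact hsum_ge
    · intro heq
      rw [htrC, htrCB] at heq
      have hall : ∀ v ∈ F, quadForm X (fun i => (v i : ℝ)) = 1 := by
        by_contra h
        push_neg at h
        obtain ⟨w, hwF, hwne⟩ := h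
        have hwgt : 1 < quadForm X (fun i => (w i : ℝ)) :=
          lt_of_le_of_ne (hXge w hwF) (Ne.symm hwne)
        have : (F.card : ℝ) < ∑ v ∈ F, quadForm X (fun i => (v i : ℝ)) := by
          calc (F.card : ℝ) = ∑ _v ∈ F, (1:ℝ) := by simp
            _ < _ := Finset.sum_lt_sum (fun v hv => hXge v hv) ⟨w, hwF, hwgt⟩
        linarith [heq]
      exact hperf X hXsymm fun v hv => hall v ((hFmem v).2 hv)
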